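/- The pairs (A, B) ∈ ℤ² with A odd and gcd(A, B) = 1 are partitioned into four classes according to residues: A ≡ B (mod 4), A ≡ −B (mod 4), B ≡ 0 (mod 4), and B ≡ 2 (mod 4); moreover these four classes are respectively parametrized (bijectively) by pairs (c, d) with gcd(4c, d) = 1 via (A,B) = (4c+d, d), (4c+3d, d), (4c+d, −4c), and (4c+d, 4c+2d). -/
import Mathlib

/-- The set of pairs `(A, B)` with `A` odd and `gcd(A, B) = 1`. -/
def S : Set (ℤ × ℤ) := {p | Odd p.1 ∧ IsCoprime p.1 p.2}

/-- Class 1: `A ≡ B (mod 4)`. -/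
def S₁ : Set (ℤ × ℤ) := {p ∈ S | p.1 ≡ p.2 [ZMOD 4]}
/-- Class 2: `A ≡ -B (mod 4)`. -/
def S₂ : Set (ℤ × ℤ) := {p ∈ S | p.1 ≡ -p.2 [ZMOD 4]}
/-- Class 3: `B ≡ 0 (mod 4)`. -/
def S₃ : Set (ℤ × ℤ) := {p ∈ S | p.2 ≡ 0 [ZMOD 4]}
/-- Class 4: `B ≡ 2 (mod 4)`. -/
def S₄ : Set (ℤ × ℤ) := {p ∈ S | p.2 ≡ 2 [ZMOD 4]}

/-- The parameter set: pairs `(c, d)` with `gcd(4c, d) = 1`. -/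
def T : Set (ℤ × ℤ) := {q | IsCoprime (4 * q.1) q.2}

private lemma comb_coprime (x y a b p q r s : ℤ) (h : IsCoprime a b)
    (ha : a = p * x + q * y) (hb : b = r * x + s * y) : IsCoprime x y := by
  obtain ⟨u, v, huv⟩ := h
  exact ⟨u * p + v * r, u * q + v * s, by subst ha hb; linear_combination huv⟩

private lemma odd_of_T (c d : ℤ) (h : IsCoprime (4 * c) d) : d % 2 = 1 := by
  rw [Int.isCoprime_iff_gcd_eq_one] at h
  by_contra hd
  have h2 : (2:ℤ) ∣ d := by omega
  have h3 := Int.dvd_gcd (⟨2 * c, by ring⟩ : (2:ℤ) ∣ 4 * c) h2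
  rw [h] at h3
  norm_num at h3

private lemma mem_S₁ (p : ℤ × ℤ) :
    p ∈ S₁ ↔ (Odd p.1 ∧ IsCoprime p.1 p.2) ∧ (4:ℤ) ∣ p.2 - p.1 := by
  simp only [S₁, S, Set.mem_setOf_eq, Int.modEq_iff_dvd]

private lemma mem_S₂ (p : ℤ × ℤ) :
    p ∈ S₂ ↔ (Odd p.1 ∧ IsCoprime p.1 p.2) ∧ (4:ℤ) ∣ -p.2 - p.1 := by
  simp only [S₂, S, Set.mem_setOf_eq, Int.modEq_iff_dvd]

private lemma mem_S₃ (p : ℤ × ℤ) :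
    p ∈ S₃ ↔ (Odd p.1 ∧ IsCoprime p.1 p.2) ∧ (4:ℤ) ∣ 0 - p.2 := by
  simp only [S₃, S, Set.mem_setOf_eq, Int.modEq_iff_dvd]

private lemma mem_S₄ (p : ℤ × ℤ) :
    p ∈ S₄ ↔ (Odd p.1 ∧ IsCoprime p.1 p.2) ∧ (4:ℤ) ∣ 2 - p.2 := by
  simp only [S₄, S, Set.mem_setOf_eq, Int.modEq_iff_dvd]

theorem coprime_pairs_partition :
    (S = S₁ ∪ S₂ ∪ S₃ ∪ S₄) ∧
    (Disjoint S₁ S₂ ∧ Disjoint S₁ S₃ ∧ Disjoint S₁ S₄ ∧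
      Disjoint S₂ S₃ ∧ Disjoint S₂ S₄ ∧ Disjoint S₃ S₄) ∧
    Set.BijOn (fun q : ℤ × ℤ => (4 * q.1 + q.2, q.2)) T S₁ ∧
    Set.BijOn (fun q : ℤ × ℤ => (4 * q.1 + 3 * q.2, q.2)) T S₂ ∧
    Set.BijOn (fun q : ℤ × ℤ => (4 * q.1 + q.2, -(4 * q.1))) T S₃ ∧
    Set.BijOn (fun q : ℤ × ℤ => (4 * q.1 + q.2, 4 * q.1 + 2 * q.2)) T S₄ := by
  refine ⟨?_, ⟨?_, ?_, ?_, ?_, ?_, ?_⟩, ?_, ?_, ?_, ?_⟩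
  · -- union
    ext p
    simp only [Set.mem_union, mem_S₁, mem_S₂, mem_S₃, mem_S₄]
    constructor
    · rintro ⟨hodd, hcop⟩
      rw [Int.odd_iff] at hodd
      have key : (4:ℤ) ∣ p.2 - p.1 ∨ (4:ℤ) ∣ -p.2 - p.1 ∨ (4:ℤ) ∣ 0 - p.2 ∨
          (4:ℤ) ∣ 2 - p.2 := by omega
      have hS : p ∈ S := ⟨Int.odd_iff.mpr hodd, hcop⟩
      rcases key with h | h | h | h
      · exact Or.inl (Or.inl (Or.inl ⟨⟨Int.odd_iff.mpr hodd, hcop⟩, h⟩))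
      · exact Or.inl (Or.inl (Or.inr ⟨⟨Int.odd_iff.mpr hodd, hcop⟩, h⟩))
      · exact Or.inl (Or.inr ⟨⟨Int.odd_iff.mpr hodd, hcop⟩, h⟩)
      · exact Or.inr ⟨⟨Int.odd_iff.mpr hodd, hcop⟩, h⟩
    · rintro (((⟨h, _⟩ | ⟨h, _⟩) | ⟨h, _⟩) | ⟨h, _⟩) <;> exact h
  · refine Set.disjoint_left.mpr fun p hp hq => ?_
    rw [mem_S₁] at hp; rw [mem_S₂] at hq
    have := Int.odd_iff.mp hp.1.1; omega
  · refine Set.disjoint_left.mpr fun p hp hq => ?_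
    rw [mem_S₁] at hp; rw [mem_S₃] at hq
    have := Int.odd_iff.mp hp.1.1; omega
  · refine Set.disjoint_left.mpr fun p hp hq => ?_
    rw [mem_S₁] at hp; rw [mem_S₄] at hq
    have := Int.odd_iff.mp hp.1.1; omega
  · refine Set.disjoint_left.mpr fun p hp hq => ?_
    rw [mem_S₂] at hp; rw [mem_S₃] at hq
    have := Int.odd_iff.mp hp.1.1; omega
  · refine Set.disjoint_left.mpr fun p hp hq => ?_
    rw [mem_S₂] at hp; rw [mem_S₄] at hq
    have := Int.odd_iff.mp hp.1.1; omega
  · refine Set.disjoint_left.mpr fun p hp hq => ?_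
    rw [mem_S₃] at hp; rw [mem_S₄] at hq
    have := Int.odd_iff.mp hp.1.1; omega
  · -- BijOn for S₁
    refine ⟨fun q hq => ?_, fun q hq q' hq' h => ?_, fun p hp => ?_⟩
    · have hd := odd_of_T _ _ hq
      show (4 * q.1 + q.2, q.2) ∈ S₁
      rw [mem_S₁]
      exact ⟨⟨Int.odd_iff.mpr (by omega),
        comb_coprime (4 * q.1 + q.2) q.2 (4 * q.1) q.2 1 (-1) 0 1 hq (by ring) (by ring)⟩,
        ⟨-q.1, by ring⟩⟩
    · simp only [Prod.mk.injEq] at h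
      obtain ⟨h1, h2⟩ := h
      exact Prod.ext (by omega) (by omega)
    · rw [mem_S₁] at hp
      obtain ⟨⟨hodd, hcop⟩, hmod⟩ := hp
      rw [Int.odd_iff] at hodd
      refine ⟨((p.1 - p.2) / 4, p.2), ?_, ?_⟩
      · have h4 : 4 * ((p.1 - p.2) / 4) = p.1 - p.2 := by omega
        show IsCoprime (4 * ((p.1 - p.2) / 4)) p.2
        rw [h4]
        exact comb_coprime _ _ p.1 p.2 1 1 0 1 hcop (by ring) (by ring)
      · exact Prod.ext (by simp; omega) rfl
  · -- BijOn for S₂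
    refine ⟨fun q hq => ?_, fun q hq q' hq' h => ?_, fun p hp => ?_⟩
    · have hd := odd_of_T _ _ hq
      show (4 * q.1 + 3 * q.2, q.2) ∈ S₂
      rw [mem_S₂]
      exact ⟨⟨Int.odd_iff.mpr (by omega),
        comb_coprime (4 * q.1 + 3 * q.2) q.2 (4 * q.1) q.2 1 (-3) 0 1 hq (by ring) (by ring)⟩,
        ⟨-q.1 - q.2, by ring⟩⟩
    · simp only [Prod.mk.injEq] at h
      obtain ⟨h1, h2⟩ := h
      exact Prod.ext (by omega) (by omega)
    · rw [mem_S₂] at hp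
      obtain ⟨⟨hodd, hcop⟩, hmod⟩ := hp
      rw [Int.odd_iff] at hodd
      refine ⟨((p.1 - 3 * p.2) / 4, p.2), ?_, ?_⟩
      · have h4 : 4 * ((p.1 - 3 * p.2) / 4) = p.1 - 3 * p.2 := by omega
        show IsCoprime (4 * ((p.1 - 3 * p.2) / 4)) p.2
        rw [h4]
        exact comb_coprime _ _ p.1 p.2 1 3 0 1 hcop (by ring) (by ring)
      · exact Prod.ext (by simp; omega) rfl
  · -- BijOn for S₃
    refine ⟨fun q hq => ?_, fun q hq q' hq' h => ?_, fun p hp => ?_⟩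
    · have hd := odd_of_T _ _ hq
      show (4 * q.1 + q.2, -(4 * q.1)) ∈ S₃
      rw [mem_S₃]
      exact ⟨⟨Int.odd_iff.mpr (by omega),
        comb_coprime (4 * q.1 + q.2) (-(4 * q.1)) (4 * q.1) q.2 0 (-1) 1 1 hq (by ring) (by ring)⟩,
        ⟨q.1, by ring⟩⟩
    · simp only [Prod.mk.injEq] at h
      obtain ⟨h1, h2⟩ := h
      exact Prod.ext (by omega) (by omega)
    · rw [mem_S₃] at hp
      obtain ⟨⟨hodd, hcop⟩, hmod⟩ := hp
      rw [Int.odd_iff] at hodd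
      refine ⟨(-p.2 / 4, p.1 + p.2), ?_, ?_⟩
      · have h4 : 4 * (-p.2 / 4) = -p.2 := by omega
        show IsCoprime (4 * (-p.2 / 4)) (p.1 + p.2)
        rw [h4]
        exact comb_coprime _ _ p.1 p.2 1 1 (-1) 0 hcop (by ring) (by ring)
      · refine Prod.ext (by simp; omega) (by simp; omega)
  · -- BijOn for S₄
    refine ⟨fun q hq => ?_, fun q hq q' hq' h => ?_, fun p hp => ?_⟩
    · have hd := odd_of_T _ _ hq
      show (4 * q.1 + q.2, 4 * q.1 + 2 * q.2) ∈ S₄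
      rw [mem_S₄]
      exact ⟨⟨Int.odd_iff.mpr (by omega),
        comb_coprime (4 * q.1 + q.2) (4 * q.1 + 2 * q.2) (4 * q.1) q.2 2 (-1) (-1) 1 hq
          (by ring) (by ring)⟩,
        ⟨-q.1 - (q.2 - 1) / 2, by omega⟩⟩
    · simp only [Prod.mk.injEq] at h
      obtain ⟨h1, h2⟩ := h
      exact Prod.ext (by omega) (by omega)
    · rw [mem_S₄] at hp
      obtain ⟨⟨hodd, hcop⟩, hmod⟩ := hp
      rw [Int.odd_iff] at hodd
      refine ⟨((2 * p.1 - p.2) / 4, p.2 - p.1), ?_, ?_⟩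
      · have h4 : 4 * ((2 * p.1 - p.2) / 4) = 2 * p.1 - p.2 := by omega
        show IsCoprime (4 * ((2 * p.1 - p.2) / 4)) (p.2 - p.1)
        rw [h4]
        exact comb_coprime _ _ p.1 p.2 1 1 1 2 hcop (by ring) (by ring)
      · refine Prod.ext (by simp; omega) (by simp; omega)
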